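/- arXiv:2307.12048 — 2 statements merged into one kernel-verified Lean document; each statement's English description precedes it below -/
import Mathlib

section
/- Let p : (0,∞) × X × X → [0,∞) satisfy the sub-Markov property ∫ p(s,x,y) dμ(y) ≤ 1. Suppose A ⊆ X is measurable and there exist T ∈ (0,∞], measurable φ₁ : (0,T) → [0,∞) and φ₂ : A → [0,∞) such that p(t,x,y) ≤ φ₁(t)·φ₂(y) for all 0 < t < T and x, y ∈ A. Then for q ∈ (1,∞), all measurable w and 0 < t < T: sup_{x∈A} ∫_0^t ∫_A p(s,x,y)|w(y)| dμ(y) ds ≤ (∫_0^t φ₁(s)^{1/q} ds) · (∫_A |w(y)|^q φ₂(y) dμ(y))^{1/q}. -/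
open MeasureTheory ENNReal Set Filter

/- Hölder's inequality with exponents `q' = q/(q-1)` and `q` against `μ` on `A`, after splitting
`p = p ^ (1/q') * p ^ (1/q)`, bounds the inner integral by
`(∫_A p) ^ (1/q') (∫_A p |w|^q) ^ (1/q) ≤ (∫_A p |w|^q) ^ (1/q)` thanks to the sub-Markov
property; the product bound then turns `∫_A p |w|^q` into `φ₁(s) ∫_A |w|^q φ₂`, and it remains
to integrate in `s`. -/

/-- Jensen's inequality for `x ↦ x ^ q` against the sub-probability measure `ν.withDensity k`. -/
theorem lintegral_mul_le_rpow_lintegral_mul_rpow {α : Type*} [MeasurableSpace α]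
    {ν : Measure α} {k g : α → ℝ≥0∞} (hk : AEMeasurable k ν) (hg : AEMeasurable g ν)
    (hk_one : ∫⁻ a, k a ∂ν ≤ 1) {q : ℝ} (hq : 1 < q) :
    ∫⁻ a, k a * g a ∂ν ≤ (∫⁻ a, k a * g a ^ q ∂ν) ^ (1 / q) := by
  have hq' : (Real.conjExponent q).HolderConjugate q :=
    (Real.HolderConjugate.conjExponent hq).symm
  set q' := Real.conjExponent q
  have hq'_inv_nonneg : 0 ≤ 1 / q' := hq'.one_div_pos.le
  have hq_inv_nonneg : 0 ≤ 1 / q := hq'.symm.one_div_pos.le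
  have split : ∀ a, k a * g a = k a ^ (1 / q') * (k a ^ (1 / q) * g a) := fun a => by
    rw [← mul_assoc, ← ENNReal.rpow_add_of_nonneg _ _ hq'_inv_nonneg hq_inv_nonneg, one_div,
      one_div, hq'.inv_add_inv_eq_one, ENNReal.rpow_one]
  have first_factor : ∀ a, (k a ^ (1 / q')) ^ q' = k a := fun a => by
    rw [← ENNReal.rpow_mul, one_div, inv_mul_cancel₀ hq'.ne_zero, ENNReal.rpow_one]
  have second_factor : ∀ a, (k a ^ (1 / q) * g a) ^ q = k a * g a ^ q := fun a => by
    rw [ENNReal.mul_rpow_of_nonneg _ _ hq'.symm.nonneg, ← ENNReal.rpow_mul, one_div,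
      inv_mul_cancel₀ hq'.symm.ne_zero, ENNReal.rpow_one]
  calc ∫⁻ a, k a * g a ∂ν
      = ∫⁻ a, k a ^ (1 / q') * (k a ^ (1 / q) * g a) ∂ν := by simp only [split]
    _ ≤ (∫⁻ a, (k a ^ (1 / q')) ^ q' ∂ν) ^ (1 / q') *
          (∫⁻ a, (k a ^ (1 / q) * g a) ^ q ∂ν) ^ (1 / q) :=
        ENNReal.lintegral_mul_le_Lp_mul_Lq ν hq' (hk.pow_const _) ((hk.pow_const _).mul hg)
    _ ≤ 1 * (∫⁻ a, k a * g a ^ q ∂ν) ^ (1 / q) := by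
        simp only [first_factor, second_factor]
        gcongr
        exact ENNReal.rpow_le_one hk_one hq'_inv_nonneg
    _ = (∫⁻ a, k a * g a ^ q ∂ν) ^ (1 / q) := one_mul _

theorem setLIntegral_mul_rpow_le_of_le_mul {X : Type*} [MeasurableSpace X] {μ : Measure X}
    {A : Set X} {k φ₂ g : X → ℝ≥0∞} {c : ℝ≥0∞} (hφ₂ : Measurable φ₂) (hg : Measurable g)
    (hk : ∀ y ∈ A, k y ≤ c * φ₂ y) (q : ℝ) :
    ∫⁻ y in A, k y * g y ^ q ∂μ ≤ c * ∫⁻ y in A, g y ^ q * φ₂ y ∂μ := by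
  calc ∫⁻ y in A, k y * g y ^ q ∂μ
      ≤ ∫⁻ y in A, c * (g y ^ q * φ₂ y) ∂μ :=
        setLIntegral_mono (((hg.pow_const q).mul hφ₂).const_mul c) fun y hy => by
          rw [mul_comm (g y ^ q), ← mul_assoc]
          gcongr
          exact hk y hy
    _ = c * ∫⁻ y in A, g y ^ q * φ₂ y ∂μ := lintegral_const_mul c ((hg.pow_const q).mul hφ₂)

theorem dynkin_norm_holder_bound_general
    {X : Type*} [MeasurableSpace X] (μ : Measure X)
    (p : ℝ → X → X → ℝ≥0∞)
    (hmeas : ∀ s > (0:ℝ), Measurable (Function.uncurry (p s)))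
    (hsub : ∀ s > (0:ℝ), ∀ x : X, ∫⁻ y, p s x y ∂μ ≤ 1)
    (A : Set X)
    (T : ℝ≥0∞)
    (φ₁ : ℝ → ℝ≥0∞) (hφ₁ : Measurable φ₁)
    (φ₂ : X → ℝ≥0∞) (hφ₂ : Measurable φ₂)
    (hbound : ∀ t : ℝ, 0 < t → (ENNReal.ofReal t) < T → ∀ x ∈ A, ∀ y ∈ A, p t x y ≤ φ₁ t * φ₂ y)
    (q : ℝ) (hq : 1 < q)
    (w : X → ℝ) (hw : Measurable w)
    (t : ℝ) (htT : (ENNReal.ofReal t) < T) :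
    (⨆ x ∈ A, ∫⁻ s in Ioc (0:ℝ) t, ∫⁻ y in A, p s x y * ENNReal.ofReal |w y| ∂μ)
      ≤ (∫⁻ s in Ioc (0:ℝ) t, (φ₁ s) ^ (1/q)) *
        (∫⁻ y in A, (ENNReal.ofReal |w y|) ^ q * φ₂ y ∂μ) ^ (1/q) := by
  set I := ∫⁻ y in A, (ENNReal.ofReal |w y|) ^ q * φ₂ y ∂μ
  have hq_inv_nonneg : 0 ≤ 1 / q := by positivity
  have hwm : Measurable fun y => ENNReal.ofReal |w y| := hw.abs.ennreal_ofReal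
  refine iSup₂_le fun x hx => ?_
  have inner_bound : ∀ s ∈ Ioc (0:ℝ) t,
      ∫⁻ y in A, p s x y * ENNReal.ofReal |w y| ∂μ ≤ φ₁ s ^ (1 / q) * I ^ (1 / q) := by
    rintro s ⟨hs, hst⟩
    have hsT : ENNReal.ofReal s < T := (ENNReal.ofReal_le_ofReal hst).trans_lt htT
    have hps : Measurable (p s x) := (hmeas s hs).comp measurable_prodMk_left
    calc ∫⁻ y in A, p s x y * ENNReal.ofReal |w y| ∂μ
        ≤ (∫⁻ y in A, p s x y * ENNReal.ofReal |w y| ^ q ∂μ) ^ (1 / q) :=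
          lintegral_mul_le_rpow_lintegral_mul_rpow hps.aemeasurable hwm.aemeasurable
            ((setLIntegral_le_lintegral _ _).trans (hsub s hs x)) hq
      _ ≤ (φ₁ s * I) ^ (1 / q) := by
          gcongr
          exact setLIntegral_mul_rpow_le_of_le_mul hφ₂ hwm (hbound s hs hsT x hx) q
      _ = φ₁ s ^ (1 / q) * I ^ (1 / q) := ENNReal.mul_rpow_of_nonneg _ _ hq_inv_nonneg
  calc ∫⁻ s in Ioc (0:ℝ) t, ∫⁻ y in A, p s x y * ENNReal.ofReal |w y| ∂μ
      ≤ ∫⁻ s in Ioc (0:ℝ) t, φ₁ s ^ (1 / q) * I ^ (1 / q) :=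
        setLIntegral_mono ((hφ₁.pow_const _).mul_const _) inner_bound
    _ = (∫⁻ s in Ioc (0:ℝ) t, φ₁ s ^ (1 / q)) * I ^ (1 / q) :=
        lintegral_mul_const _ (hφ₁.pow_const _)

/-- Hölder-type bound for the localized Dynkin norm under a product
upper bound `p(t,x,y) ≤ φ₁(t) φ₂(y)` on a set `A`. -/
theorem dynkin_norm_holder_bound
    {X : Type*} [MeasurableSpace X] (μ : Measure X)
    (p : ℝ → X → X → ℝ≥0∞)
    (hmeas : ∀ s > (0:ℝ), Measurable (Function.uncurry (p s)))
    (hsub : ∀ s > (0:ℝ), ∀ x : X, ∫⁻ y, p s x y ∂μ ≤ 1)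
    (A : Set X) (hA : MeasurableSet A)
    (T : ℝ≥0∞) (hT : 0 < T)
    (φ₁ : ℝ → ℝ≥0∞) (hφ₁ : Measurable φ₁)
    (φ₂ : X → ℝ≥0∞) (hφ₂ : Measurable φ₂)
    (hbound : ∀ t : ℝ, 0 < t → (ENNReal.ofReal t) < T → ∀ x ∈ A, ∀ y ∈ A, p t x y ≤ φ₁ t * φ₂ y)
    (q : ℝ) (hq : 1 < q)
    (w : X → ℝ) (hw : Measurable w)
    (t : ℝ) (ht : 0 < t) (htT : (ENNReal.ofReal t) < T) :
    (⨆ x ∈ A, ∫⁻ s in Ioc (0:ℝ) t, ∫⁻ y in A, p s x y * ENNReal.ofReal |w y| ∂μ)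
      ≤ (∫⁻ s in Ioc (0:ℝ) t, (φ₁ s) ^ (1/q)) *
        (∫⁻ y in A, (ENNReal.ofReal |w y|) ^ q * φ₂ y ∂μ) ^ (1/q) :=
  dynkin_norm_holder_bound_general μ p hmeas hsub A T φ₁ hφ₁ φ₂ hφ₂ hbound q hq w hw t htT
end

section
/- Suppose a heat kernel satisfies the local Gaussian upper bound p(t,x,y) ≤ α m(x,√t)^{-1} e^{-β d(x,y)²/t} e^{γt} together with local N-volume doubling m(x,R) ≤ a e^{aR}(R/r)^N m(x,r). Then for all 0 < t < 1 and x, y: p(t,x,y) ≤ α a e^{a+γ} t^{-N/2} m(x,1)^{-1}. Consequently, for every q ∈ (N/2, ∞), every w ∈ L^q(X, φ·dm) with φ(x) := 1/m(x,1) lies in the Kato class: sup_x ∫_0^t ∫ p(s,x,y)|w(y)| dm(y) ds ≤ C ∫_0^t s^{-N/(2q)} ds · ‖w‖_{L^q_φ} → 0 as t → 0+. -/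
/-!
Doubling from radius `√t` up to radius `1` turns the Gaussian bound into
`p(t,x,y) ≲ t^{-N/2} m(x,1)⁻¹`. Doubling up to radius `1 + d(x,y)` instead gives
`p(t,x,y) ≲ t^{-N/2} m(y,1)⁻¹`: the doubling loss `e^{a d} (1 + d)^N` is absorbed by the
Gaussian factor `e^{-β d²}`. Since `∫ p(s,x,·) ≤ 1`, Hölder's inequality gives
`∫ p(s,x,y) |w y| dy ≤ (∫ p(s,x,y) |w y|^q dy)^{1/q} ≲ s^{-N/(2q)} ‖w‖_{L^q_φ}`,
and `s^{-N/(2q)}` is integrable near `0` because `q > N/2`.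
-/

open MeasureTheory ENNReal Set Metric Filter Topology

namespace Real

theorem rpow_div_sqrt {R t : ℝ} (hR : 0 ≤ R) (ht : 0 < t) (N : ℝ) :
    (R / √t) ^ N = R ^ N * t ^ (-(N / 2)) := by
  rw [Real.div_rpow hR (Real.sqrt_nonneg t), div_eq_mul_inv, Real.sqrt_eq_rpow,
    ← Real.rpow_mul ht.le, ← Real.rpow_neg ht.le, neg_mul_eq_mul_neg, one_div, inv_mul_eq_div,
    neg_div]

theorem exp_neg_div_mul_exp_mul_le {β γ t : ℝ} (hβ : 0 ≤ β) (hγ : 0 ≤ γ) (ht : 0 < t)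
    (ht1 : t ≤ 1) (d : ℝ) :
    Real.exp (-β * d ^ 2 / t) * Real.exp (γ * t) ≤ Real.exp (-(β * d ^ 2)) * Real.exp γ := by
  rw [← Real.exp_add, ← Real.exp_add, Real.exp_le_exp]
  have h1 : β * d ^ 2 ≤ β * d ^ 2 / t := le_div_self (by positivity) ht ht1
  have h2 : γ * t ≤ γ := mul_le_of_le_one_right hγ ht1
  rw [neg_mul, neg_div]
  linarith

theorem exp_mul_one_add_rpow_mul_exp_le {a N β d : ℝ} (hN : 0 ≤ N) (hβ : 0 < β)
    (hd : 0 ≤ d) :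
    Real.exp (a * d) * (1 + d) ^ N * Real.exp (-(β * d ^ 2)) ≤
      Real.exp ((a + N) ^ 2 / (4 * β)) := by
  have hpow : (1 + d) ^ N ≤ Real.exp (d * N) := by
    rw [Real.exp_mul]
    exact Real.rpow_le_rpow (by positivity) (by linarith [Real.add_one_le_exp d]) hN
  have hquad : a * d + d * N - β * d ^ 2 ≤ (a + N) ^ 2 / (4 * β) := by
    rw [le_div_iff₀ (by positivity)]
    nlinarith [sq_nonneg (2 * β * d - (a + N))]
  calc Real.exp (a * d) * (1 + d) ^ N * Real.exp (-(β * d ^ 2))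
      ≤ Real.exp (a * d) * Real.exp (d * N) * Real.exp (-(β * d ^ 2)) := by gcongr
    _ = Real.exp (a * d + d * N - β * d ^ 2) := by
      rw [← Real.exp_add, ← Real.exp_add, ← sub_eq_add_neg]
    _ ≤ Real.exp ((a + N) ^ 2 / (4 * β)) := Real.exp_le_exp.2 hquad

end Real

theorem ENNReal.inv_le_mul_inv_of_le_mul {u v c : ℝ≥0∞} (hc0 : c ≠ 0) (hc : c ≠ ∞)
    (h : u ≤ c * v) : v⁻¹ ≤ c * u⁻¹ :=
  calc v⁻¹ = c * (c * v)⁻¹ := by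
        rw [ENNReal.mul_inv (Or.inl hc0) (Or.inl hc), ← mul_assoc,
          ENNReal.mul_inv_cancel hc0 hc, one_mul]
    _ ≤ c * u⁻¹ := by gcongr

theorem lintegral_Ioc_rpow {r : ℝ} (hr : -1 < r) {t : ℝ} (ht : 0 < t) :
    ∫⁻ s in Ioc 0 t, ENNReal.ofReal (s ^ r) = ENNReal.ofReal (t ^ (r + 1) / (r + 1)) := by
  have hint : IntegrableOn (fun s : ℝ => s ^ r) (Ioc 0 t) :=
    (intervalIntegral.intervalIntegrable_rpow' hr).1
  have hnn : 0 ≤ᵐ[volume.restrict (Ioc 0 t)] fun s : ℝ => s ^ r := by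
    filter_upwards [ae_restrict_mem measurableSet_Ioc] with s hs
    exact Real.rpow_nonneg hs.1.le _
  rw [← ofReal_integral_eq_lintegral_ofReal hint hnn, ← intervalIntegral.integral_of_le ht.le,
    integral_rpow (Or.inl hr), Real.zero_rpow (by linarith), sub_zero]

theorem tendsto_lintegral_Ioc_rpow_nhdsGT_zero {r : ℝ} (hr : -1 < r) :
    Tendsto (fun t => ∫⁻ s in Ioc 0 t, ENNReal.ofReal (s ^ r)) (𝓝[>] 0) (𝓝 0) := by
  have hcont : ContinuousAt (fun t : ℝ => ENNReal.ofReal (t ^ (r + 1) / (r + 1))) 0 :=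
    ENNReal.continuous_ofReal.continuousAt.comp
      ((Real.continuousAt_rpow_const 0 (r + 1) (Or.inr (by linarith))).div_const _)
  have hlim := hcont.tendsto.mono_left (nhdsWithin_le_nhds (s := Ioi 0))
  rw [Real.zero_rpow (by linarith), zero_div, ENNReal.ofReal_zero] at hlim
  refine hlim.congr' ?_
  filter_upwards [self_mem_nhdsWithin] with t ht
  exact (lintegral_Ioc_rpow hr ht).symm

theorem lintegral_mul_le_lintegral_mul_rpow {X : Type*} [MeasurableSpace X] {μ : Measure X}
    {k f : X → ℝ≥0∞} (hk : AEMeasurable k μ) (hf : AEMeasurable f μ)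
    (hk1 : ∫⁻ y, k y ∂μ ≤ 1) {q : ℝ} (hq : 1 < q) :
    ∫⁻ y, k y * f y ∂μ ≤ (∫⁻ y, k y * f y ^ q ∂μ) ^ (1 / q) := by
  set q' := q.conjExponent
  have hqq' : q'.HolderConjugate q := (Real.HolderConjugate.conjExponent hq).symm
  have hsplit : ∀ y, k y * f y = k y ^ (1 / q') * (k y ^ (1 / q) * f y) := by
    intro y
    rw [← mul_assoc,
      ← ENNReal.rpow_add_of_nonneg _ _ hqq'.one_div_nonneg hqq'.symm.one_div_nonneg,
      hqq'.one_div_add_one_div, div_one, ENNReal.rpow_one]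
  have hk_pow : ∀ y, (k y ^ (1 / q')) ^ q' = k y := fun y => by
    rw [← ENNReal.rpow_mul, one_div_mul_cancel hqq'.ne_zero, ENNReal.rpow_one]
  have hkf_pow : ∀ y, (k y ^ (1 / q) * f y) ^ q = k y * f y ^ q := fun y => by
    rw [ENNReal.mul_rpow_of_nonneg _ _ (by linarith), ← ENNReal.rpow_mul,
      one_div_mul_cancel (by linarith), ENNReal.rpow_one]
  calc ∫⁻ y, k y * f y ∂μ
      = ∫⁻ y, ((fun y => k y ^ (1 / q')) * fun y => k y ^ (1 / q) * f y) y ∂μ := by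
        simp only [hsplit, Pi.mul_apply]
    _ ≤ (∫⁻ y, (k y ^ (1 / q')) ^ q' ∂μ) ^ (1 / q') *
          (∫⁻ y, (k y ^ (1 / q) * f y) ^ q ∂μ) ^ (1 / q) :=
        ENNReal.lintegral_mul_le_Lp_mul_Lq μ hqq' (hk.pow_const _)
          ((hk.pow_const _).mul hf)
    _ ≤ 1 * (∫⁻ y, k y * f y ^ q ∂μ) ^ (1 / q) := by
        simp only [hk_pow, hkf_pow]
        gcongr
        exact (ENNReal.rpow_le_rpow hk1 hqq'.one_div_nonneg).trans_eq (ENNReal.one_rpow _)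
    _ = (∫⁻ y, k y * f y ^ q ∂μ) ^ (1 / q) := one_mul _

theorem lintegral_mul_le_rpow_of_le_mul {X : Type*} [MeasurableSpace X] {μ : Measure X}
    {k f φ : X → ℝ≥0∞} (hk : AEMeasurable k μ) (hf : AEMeasurable f μ)
    (hk1 : ∫⁻ y, k y ∂μ ≤ 1) {q : ℝ} (hq : 1 < q) {c : ℝ≥0∞} (hc : c ≠ ∞)
    (hkc : ∀ y, k y ≤ c * φ y) :
    ∫⁻ y, k y * f y ∂μ ≤ c ^ (1 / q) * (∫⁻ y, f y ^ q * φ y ∂μ) ^ (1 / q) := by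
  calc ∫⁻ y, k y * f y ∂μ ≤ (∫⁻ y, k y * f y ^ q ∂μ) ^ (1 / q) :=
        lintegral_mul_le_lintegral_mul_rpow hk hf hk1 hq
    _ ≤ (∫⁻ y, c * (f y ^ q * φ y) ∂μ) ^ (1 / q) := by
        refine ENNReal.rpow_le_rpow (lintegral_mono fun y => ?_) (by positivity)
        calc k y * f y ^ q ≤ c * φ y * f y ^ q := mul_le_mul_left (hkc y) _
          _ = c * (f y ^ q * φ y) := by ring
    _ = c ^ (1 / q) * (∫⁻ y, f y ^ q * φ y ∂μ) ^ (1 / q) := by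
        rw [lintegral_const_mul' _ _ hc, ENNReal.mul_rpow_of_nonneg _ _ (by positivity)]

section HeatKernel

variable {X : Type*} [PseudoMetricSpace X] [MeasurableSpace X] {μ : Measure X}

def LocalVolumeDoubling (μ : Measure X) (a N : ℝ) : Prop :=
  ∀ x : X, ∀ r R : ℝ, 0 < r → r < R →
    μ (ball x R) ≤ ENNReal.ofReal (a * Real.exp (a * R) * (R / r) ^ N) * μ (ball x r)

def LocalGaussianUpperBound (μ : Measure X) (p : ℝ → X → X → ℝ≥0∞) (α β γ : ℝ) :
    Prop :=
  ∀ t : ℝ, 0 < t → ∀ x y : X,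
    p t x y ≤ ENNReal.ofReal α * (μ (ball x √t))⁻¹ *
      ENNReal.ofReal (Real.exp (-β * dist x y ^ 2 / t) * Real.exp (γ * t))

noncomputable def katoNorm (μ : Measure X) (p : ℝ → X → X → ℝ≥0∞) (w : X → ℝ) (t : ℝ) :
    ℝ≥0∞ :=
  ⨆ x : X, ∫⁻ s in Ioc 0 t, ∫⁻ y, p s x y * ENNReal.ofReal |w y| ∂μ

theorem LocalVolumeDoubling.inv_measure_ball_le {a N : ℝ} (hVD : LocalVolumeDoubling μ a N)
    (ha : 0 < a) {x : X} {r R : ℝ} (hr : 0 < r) (hrR : r < R) {S : Set X}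
    (hS : S ⊆ ball x R) :
    (μ (ball x r))⁻¹ ≤ ENNReal.ofReal (a * Real.exp (a * R) * (R / r) ^ N) * (μ S)⁻¹ := by
  have hc : 0 < a * Real.exp (a * R) * (R / r) ^ N := by
    have := Real.rpow_pos_of_pos (div_pos (hr.trans hrR) hr) N
    positivity
  exact ENNReal.inv_le_mul_inv_of_le_mul (ENNReal.ofReal_pos.2 hc).ne' ENNReal.ofReal_ne_top
    ((measure_mono hS).trans (hVD x r R hr hrR))

namespace LocalGaussianUpperBound

variable {p : ℝ → X → X → ℝ≥0∞} {α β γ a N : ℝ}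

theorem le_ofReal_mul_inv_measure (hGUE : LocalGaussianUpperBound μ p α β γ)
    (hVD : LocalVolumeDoubling μ a N) (hα : 0 ≤ α) (ha : 0 < a) {t R : ℝ} (ht : 0 < t)
    (hR : √t < R) {x : X} (y : X) {S : Set X} (hS : S ⊆ ball x R) :
    p t x y ≤ ENNReal.ofReal (α * (a * Real.exp (a * R) * (R / √t) ^ N) *
      (Real.exp (-β * dist x y ^ 2 / t) * Real.exp (γ * t))) * (μ S)⁻¹ := by
  have hinv := hVD.inv_measure_ball_le ha (Real.sqrt_pos.2 ht) hR hS
  have hc : 0 ≤ a * Real.exp (a * R) * (R / √t) ^ N := by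
    have := Real.rpow_nonneg (div_nonneg ((Real.sqrt_nonneg t).trans hR.le)
      (Real.sqrt_nonneg t)) N
    positivity
  calc p t x y ≤ ENNReal.ofReal α * (μ (ball x √t))⁻¹ *
        ENNReal.ofReal (Real.exp (-β * dist x y ^ 2 / t) * Real.exp (γ * t)) := hGUE t ht x y
    _ ≤ ENNReal.ofReal α *
          (ENNReal.ofReal (a * Real.exp (a * R) * (R / √t) ^ N) * (μ S)⁻¹) *
          ENNReal.ofReal (Real.exp (-β * dist x y ^ 2 / t) * Real.exp (γ * t)) := by
        gcongr
    _ = _ := by rw [ENNReal.ofReal_mul (mul_nonneg hα hc), ENNReal.ofReal_mul hα]; ring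

theorem le_rpow_mul_inv_measure_ball_left (hGUE : LocalGaussianUpperBound μ p α β γ)
    (hVD : LocalVolumeDoubling μ a N) (hα : 0 ≤ α) (hβ : 0 ≤ β) (hγ : 0 ≤ γ) (ha : 0 < a)
    {t : ℝ} (ht0 : 0 < t) (ht1 : t < 1) (x y : X) :
    p t x y ≤
      ENNReal.ofReal (α * a * Real.exp (a + γ) * t ^ (-(N / 2))) * (μ (ball x 1))⁻¹ := by
  have hsqrt : √t < 1 := by simpa using Real.sqrt_lt_sqrt ht0.le ht1
  refine (hGUE.le_ofReal_mul_inv_measure hVD hα ha ht0 hsqrt y subset_rfl).trans ?_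
  gcongr ENNReal.ofReal ?_ * _
  have hexp : Real.exp (-β * dist x y ^ 2 / t) * Real.exp (γ * t) ≤ Real.exp γ :=
    (Real.exp_neg_div_mul_exp_mul_le hβ hγ ht0 ht1.le _).trans
      (mul_le_of_le_one_left (Real.exp_pos γ).le (Real.exp_le_one_iff.2 (by
        simpa using mul_nonneg hβ (sq_nonneg (dist x y)))))
  rw [Real.rpow_div_sqrt zero_le_one ht0, Real.one_rpow, one_mul, mul_one, Real.exp_add]
  calc α * (a * Real.exp a * t ^ (-(N / 2))) *
        (Real.exp (-β * dist x y ^ 2 / t) * Real.exp (γ * t))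
      ≤ α * (a * Real.exp a * t ^ (-(N / 2))) * Real.exp γ := by
        have := Real.rpow_nonneg ht0.le (-(N / 2))
        gcongr
    _ = α * a * (Real.exp a * Real.exp γ) * t ^ (-(N / 2)) := by ring

theorem le_rpow_mul_inv_measure_ball_right (hGUE : LocalGaussianUpperBound μ p α β γ)
    (hVD : LocalVolumeDoubling μ a N) (hα : 0 ≤ α) (hβ : 0 < β) (hγ : 0 ≤ γ) (ha : 0 < a)
    (hN : 0 ≤ N) {t : ℝ} (ht0 : 0 < t) (ht1 : t < 1) (x y : X) :
    p t x y ≤ ENNReal.ofReal (α * a * Real.exp (a + γ + (a + N) ^ 2 / (4 * β)) *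
      t ^ (-(N / 2))) * (μ (ball y 1))⁻¹ := by
  set d := dist x y
  have hd : 0 ≤ d := dist_nonneg
  have hsqrt : √t < 1 + d := by
    linarith [show √t < 1 by simpa using Real.sqrt_lt_sqrt ht0.le ht1]
  have hS : ball y 1 ⊆ ball x (1 + d) := ball_subset_ball' (by rw [dist_comm])
  refine (hGUE.le_ofReal_mul_inv_measure hVD hα ha ht0 hsqrt y hS).trans ?_
  gcongr ENNReal.ofReal ?_ * _
  have hexp := Real.exp_neg_div_mul_exp_mul_le hβ.le hγ ht0 ht1.le d
  have habsorb := Real.exp_mul_one_add_rpow_mul_exp_le (a := a) hN hβ hd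
  have ht : 0 ≤ t ^ (-(N / 2)) := Real.rpow_nonneg ht0.le _
  rw [Real.rpow_div_sqrt (by linarith) ht0]
  calc α * (a * Real.exp (a * (1 + d)) * ((1 + d) ^ N * t ^ (-(N / 2)))) *
        (Real.exp (-β * d ^ 2 / t) * Real.exp (γ * t))
      ≤ α * (a * Real.exp (a * (1 + d)) * ((1 + d) ^ N * t ^ (-(N / 2)))) *
        (Real.exp (-(β * d ^ 2)) * Real.exp γ) := by
        gcongr
    _ = α * a * Real.exp a * Real.exp γ *
        (Real.exp (a * d) * (1 + d) ^ N * Real.exp (-(β * d ^ 2))) * t ^ (-(N / 2)) := by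
        rw [mul_one_add, Real.exp_add]; ring
    _ ≤ α * a * Real.exp a * Real.exp γ * Real.exp ((a + N) ^ 2 / (4 * β)) *
        t ^ (-(N / 2)) := by gcongr
    _ = α * a * Real.exp (a + γ + (a + N) ^ 2 / (4 * β)) * t ^ (-(N / 2)) := by
        rw [Real.exp_add, Real.exp_add]; ring

theorem katoNorm_le (hGUE : LocalGaussianUpperBound μ p α β γ)
    (hVD : LocalVolumeDoubling μ a N)
    (hpmeas : ∀ s > (0 : ℝ), Measurable (Function.uncurry (p s)))
    (hsub : ∀ s > (0 : ℝ), ∀ x : X, ∫⁻ y, p s x y ∂μ ≤ 1)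
    (hα : 0 ≤ α) (hβ : 0 < β) (hγ : 0 ≤ γ) (ha : 0 < a) (hN : 0 ≤ N) {q : ℝ} (hq : 1 < q)
    {w : X → ℝ} (hw : Measurable w) {t : ℝ} (ht1 : t < 1) :
    katoNorm μ p w t ≤
      ENNReal.ofReal ((α * a * Real.exp (a + γ + (a + N) ^ 2 / (4 * β))) ^ (1 / q)) *
        (∫⁻ s in Ioc 0 t, ENNReal.ofReal (s ^ (-(N / (2 * q))))) *
        (∫⁻ y, ENNReal.ofReal |w y| ^ q * (μ (ball y 1))⁻¹ ∂μ) ^ (1 / q) := by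
  set C := α * a * Real.exp (a + γ + (a + N) ^ 2 / (4 * β))
  set K := ∫⁻ y, ENNReal.ofReal |w y| ^ q * (μ (ball y 1))⁻¹ ∂μ
  have hC : 0 ≤ C := by positivity
  have hpoint : ∀ x, ∀ s ∈ Ioc 0 t, ∫⁻ y, p s x y * ENNReal.ofReal |w y| ∂μ ≤
      ENNReal.ofReal (C ^ (1 / q)) * K ^ (1 / q) * ENNReal.ofReal (s ^ (-(N / (2 * q)))) := by
    rintro x s ⟨hs0, hst⟩
    have hs : 0 ≤ s ^ (-(N / 2)) := Real.rpow_nonneg hs0.le _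
    calc ∫⁻ y, p s x y * ENNReal.ofReal |w y| ∂μ
        ≤ ENNReal.ofReal (C * s ^ (-(N / 2))) ^ (1 / q) * K ^ (1 / q) :=
          lintegral_mul_le_rpow_of_le_mul
            ((hpmeas s hs0).comp measurable_prodMk_left).aemeasurable
            hw.abs.ennreal_ofReal.aemeasurable (hsub s hs0 x) hq ENNReal.ofReal_ne_top
            (hGUE.le_rpow_mul_inv_measure_ball_right hVD hα hβ hγ ha hN hs0
              (hst.trans_lt ht1) x)
      _ = _ := by
          rw [ENNReal.ofReal_rpow_of_nonneg (mul_nonneg hC hs) (by positivity),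
            Real.mul_rpow hC hs, ← Real.rpow_mul hs0.le, ENNReal.ofReal_mul (by positivity),
            show -(N / 2) * (1 / q) = -(N / (2 * q)) by ring]
          ring
  refine iSup_le fun x => (setLIntegral_mono' measurableSet_Ioc (hpoint x)).trans_eq ?_
  rw [lintegral_const_mul _ (by fun_prop)]
  ring

end LocalGaussianUpperBound

end HeatKernel

theorem gue_vd_implies_kato_general
    {X : Type*} [PseudoMetricSpace X] [MeasurableSpace X]
    (μ : Measure X)
    (p : ℝ → X → X → ℝ≥0∞)
    (hpmeas : ∀ s > (0:ℝ), Measurable (Function.uncurry (p s)))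
    (hsub : ∀ s > (0:ℝ), ∀ x : X, ∫⁻ y, p s x y ∂μ ≤ 1)
    (α β γ a N q : ℝ)
    (hα : 0 < α) (hβ : 0 < β) (hγ : 0 < γ) (ha : 0 < a)
    (hN : 2 ≤ N) (hq : N/2 < q)
    (hGUE : ∀ t : ℝ, 0 < t → ∀ x y : X,
      p t x y ≤ ENNReal.ofReal α * (μ (ball x (Real.sqrt t)))⁻¹ *
        ENNReal.ofReal (Real.exp (-β * (dist x y)^2 / t) * Real.exp (γ * t)))
    (hVD : ∀ x : X, ∀ r R : ℝ, 0 < r → r < R →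
      μ (ball x R) ≤ ENNReal.ofReal (a * Real.exp (a * R) * (R / r) ^ N) * μ (ball x r)) :
    (∀ t : ℝ, 0 < t → t < 1 → ∀ x y : X,
      p t x y ≤ ENNReal.ofReal (α * a * Real.exp (a + γ) * t ^ (-(N/2))) * (μ (ball x 1))⁻¹) ∧
    (∃ C : ℝ≥0∞, C ≠ 0 ∧ C ≠ ∞ ∧
      ∀ w : X → ℝ, Measurable w → ∀ t : ℝ, 0 < t → t < 1 →
        (⨆ x : X, ∫⁻ s in Ioc (0:ℝ) t, ∫⁻ y, p s x y * ENNReal.ofReal |w y| ∂μ)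
          ≤ C * (∫⁻ s in Ioc (0:ℝ) t, ENNReal.ofReal (s ^ (-(N/(2*q))))) *
            (∫⁻ y, (ENNReal.ofReal |w y|) ^ q * (μ (ball y 1))⁻¹ ∂μ) ^ (1/q)) ∧
    (∀ w : X → ℝ, Measurable w →
      (∫⁻ y, (ENNReal.ofReal |w y|) ^ q * (μ (ball y 1))⁻¹ ∂μ) < ∞ →
      Tendsto (fun t => ⨆ x : X, ∫⁻ s in Ioc (0:ℝ) t, ∫⁻ y, p s x y * ENNReal.ofReal |w y| ∂μ)
        (𝓝[>] (0:ℝ)) (𝓝 0)) := by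
  have hq1 : 1 < q := by linarith
  have hkato := fun w (hw : Measurable w) t (ht1 : t < 1) =>
    LocalGaussianUpperBound.katoNorm_le hGUE hVD hpmeas hsub hα.le hβ hγ.le ha (by linarith) hq1
      hw ht1
  set C := ENNReal.ofReal ((α * a * Real.exp (a + γ + (a + N) ^ 2 / (4 * β))) ^ (1 / q))
  refine ⟨fun t ht0 ht1 => LocalGaussianUpperBound.le_rpow_mul_inv_measure_ball_left hGUE hVD
      hα.le hβ.le hγ.le ha ht0 ht1,
    ⟨C, by positivity, ENNReal.ofReal_ne_top, fun w hw t _ ht1 => hkato w hw t ht1⟩,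
    fun w hw hK => ?_⟩
  have hr : -1 < -(N / (2 * q)) := by
    rw [neg_lt_neg_iff, div_lt_one (by linarith)]
    linarith
  have hlim : Tendsto (fun t => C * (∫⁻ s in Ioc 0 t, ENNReal.ofReal (s ^ (-(N / (2 * q))))) *
      (∫⁻ y, ENNReal.ofReal |w y| ^ q * (μ (ball y 1))⁻¹ ∂μ) ^ (1 / q)) (𝓝[>] 0) (𝓝 0) := by
    simpa only [mul_zero, zero_mul] using ENNReal.Tendsto.mul_const
      (ENNReal.Tendsto.const_mul (tendsto_lintegral_Ioc_rpow_nhdsGT_zero hr)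
        (Or.inr ENNReal.ofReal_ne_top))
      (Or.inr (ENNReal.rpow_ne_top_of_nonneg (by positivity) hK.ne))
  exact tendsto_of_tendsto_of_tendsto_of_le_of_le' tendsto_const_nhds hlim
    (Eventually.of_forall fun _ => zero_le)
    (mem_of_superset (Ioo_mem_nhdsGT one_pos) fun t ht => hkato w hw t ht.2)

/-- a local Gaussian upper bound plus local `N`-volume doubling gives the
on-diagonal bound `p(t,x,y) ≤ α a e^{a+γ} t^{-N/2} m(x,1)⁻¹` for `0 < t < 1`, and
consequently every `w ∈ L^q(X, φ dm)` with `φ(x) = 1/m(x,1)` and `q > N/2` lies in the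
Kato class. -/
theorem gue_vd_implies_kato
    {X : Type*} [PseudoMetricSpace X] [MeasurableSpace X] [OpensMeasurableSpace X]
    (μ : Measure X)
    (p : ℝ → X → X → ℝ≥0∞)
    (hpmeas : ∀ s > (0:ℝ), Measurable (Function.uncurry (p s)))
    (hsub : ∀ s > (0:ℝ), ∀ x : X, ∫⁻ y, p s x y ∂μ ≤ 1)
    (α β γ a N q : ℝ)
    (hα : 0 < α) (hβ : 0 < β) (hγ : 0 < γ) (ha : 0 < a)
    (hN : 2 ≤ N) (hq : N/2 < q)
    (hGUE : ∀ t : ℝ, 0 < t → ∀ x y : X,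
      p t x y ≤ ENNReal.ofReal α * (μ (ball x (Real.sqrt t)))⁻¹ *
        ENNReal.ofReal (Real.exp (-β * (dist x y)^2 / t) * Real.exp (γ * t)))
    (hVD : ∀ x : X, ∀ r R : ℝ, 0 < r → r < R →
      μ (ball x R) ≤ ENNReal.ofReal (a * Real.exp (a * R) * (R / r) ^ N) * μ (ball x r)) :
    (∀ t : ℝ, 0 < t → t < 1 → ∀ x y : X,
      p t x y ≤ ENNReal.ofReal (α * a * Real.exp (a + γ) * t ^ (-(N/2))) * (μ (ball x 1))⁻¹) ∧
    (∃ C : ℝ≥0∞, C ≠ 0 ∧ C ≠ ∞ ∧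
      ∀ w : X → ℝ, Measurable w → ∀ t : ℝ, 0 < t → t < 1 →
        (⨆ x : X, ∫⁻ s in Ioc (0:ℝ) t, ∫⁻ y, p s x y * ENNReal.ofReal |w y| ∂μ)
          ≤ C * (∫⁻ s in Ioc (0:ℝ) t, ENNReal.ofReal (s ^ (-(N/(2*q))))) *
            (∫⁻ y, (ENNReal.ofReal |w y|) ^ q * (μ (ball y 1))⁻¹ ∂μ) ^ (1/q)) ∧
    (∀ w : X → ℝ, Measurable w →
      (∫⁻ y, (ENNReal.ofReal |w y|) ^ q * (μ (ball y 1))⁻¹ ∂μ) < ∞ →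
      Tendsto (fun t => ⨆ x : X, ∫⁻ s in Ioc (0:ℝ) t, ∫⁻ y, p s x y * ENNReal.ofReal |w y| ∂μ)
        (𝓝[>] (0:ℝ)) (𝓝 0)) :=
  gue_vd_implies_kato_general μ p hpmeas hsub α β γ a N q hα hβ hγ ha hN hq hGUE hVD
end
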